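/- arXiv:0909.4446 — 7 statements merged into one kernel-verified Lean document; each statement's English description precedes it below -/
import Mathlib

section
/- For every incomplete fuzzy CSP P, if the optimal preference values of the two extreme completions coincide, pref_0 = pref_1, then the set of necessarily optimal solutions equals the set of optimal solutions of the 0-completion: NOS(P) = Opt(P_0). -/
variable {A ι : Type*}

/-- `Q` is a completion of the incomplete fuzzy CSP `P`. -/
def IsCompletion (P : ι → A → Option unitInterval) (Q : ι → A → unitInterval) : Prop :=
  ∀ i s v, P i s = some v → Q i s = v

/-- Fuzzy (min-based) preference of assignment `s` in completion `Q`. -/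
noncomputable def pref [Fintype ι] [Nonempty ι] (Q : ι → A → unitInterval) (s : A) :
    unitInterval :=
  Finset.univ.inf' Finset.univ_nonempty (fun i => Q i s)

/-- The 0-completion of `P`. -/
noncomputable def comp0 (P : ι → A → Option unitInterval) : ι → A → unitInterval :=
  fun i s => (P i s).getD 0

/-- The 1-completion of `P`. -/
noncomputable def comp1 (P : ι → A → Option unitInterval) : ι → A → unitInterval :=
  fun i s => (P i s).getD 1

/-- Optimal preference value of the 0-completion. -/
noncomputable def pref0 [Fintype ι] [Nonempty ι] [Fintype A] [Nonempty A]
    (P : ι → A → Option unitInterval) : unitInterval :=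
  Finset.univ.sup' Finset.univ_nonempty (fun s => pref (comp0 P) s)

/-- Optimal preference value of the 1-completion. -/
noncomputable def pref1 [Fintype ι] [Nonempty ι] [Fintype A] [Nonempty A]
    (P : ι → A → Option unitInterval) : unitInterval :=
  Finset.univ.sup' Finset.univ_nonempty (fun s => pref (comp1 P) s)

/-- `s` is optimal in completion `Q`. -/
def Optimal [Fintype ι] [Nonempty ι] (Q : ι → A → unitInterval) (s : A) : Prop :=
  ∀ t, pref Q t ≤ pref Q s

/-- Set of optimal assignments of a completion. -/
def Opt [Fintype ι] [Nonempty ι] (Q : ι → A → unitInterval) : Set A :=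
  {s | Optimal Q s}

/-- Necessarily optimal solutions. -/
def NOS [Fintype ι] [Nonempty ι] (P : ι → A → Option unitInterval) : Set A :=
  {s | ∀ Q, IsCompletion P Q → Optimal Q s}

/-- Possibly optimal solutions. -/
def POS [Fintype ι] [Nonempty ι] (P : ι → A → Option unitInterval) : Set A :=
  {s | ∃ Q, IsCompletion P Q ∧ Optimal Q s}

/-- Known preference: min of the specified preferences of `s`, or 1 if none. -/
noncomputable def kpref [Fintype ι] (P : ι → A → Option unitInterval) (s : A) : unitInterval :=
  (Finset.univ.filter (fun i => (P i s).isSome)).inf (fun i => (P i s).getD 1)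

/-- `P'` is a partial completion of `P`. -/
def IsPartialCompletion (P P' : ι → A → Option unitInterval) : Prop :=
  ∀ i s v, P i s = some v → P' i s = some v

/-- If `pref_0 = pref_1` then `NOS(P) = Opt(P_0)`. -/
theorem stmt_5 [Fintype ι] [Nonempty ι] [Fintype A] [Nonempty A]
    (P : ι → A → Option unitInterval) (h : pref0 P = pref1 P) :
    NOS P = Opt (comp0 P) := by
  have hmono : ∀ (Q R : ι → A → unitInterval), (∀ i s, Q i s ≤ R i s) →
      ∀ s, pref Q s ≤ pref R s := by
    intro Q R hQR s
    apply Finset.le_inf'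
    intro i _
    exact le_trans (Finset.inf'_le _ (Finset.mem_univ i)) (hQR i s)
  have h0 : ∀ Q, IsCompletion P Q → ∀ i s, comp0 P i s ≤ Q i s := by
    intro Q hQ i s
    cases hP : P i s with
    | none => simp [comp0, hP, unitInterval.nonneg']
    | some v => simp [comp0, hP, hQ i s v hP]
  have h1 : ∀ Q, IsCompletion P Q → ∀ i s, Q i s ≤ comp1 P i s := by
    intro Q hQ i s
    cases hP : P i s with
    | none => simp [comp1, hP, unitInterval.le_one']
    | some v => simp [comp1, hP, hQ i s v hP]
  have hc0 : IsCompletion P (comp0 P) := by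
    intro i s v hv; simp [comp0, hv]
  ext s
  constructor
  · intro hs
    exact hs (comp0 P) hc0
  · intro hs Q hQ t
    have hts : pref (comp0 P) s = pref0 P := by
      apply le_antisymm
      · exact Finset.le_sup' _ (Finset.mem_univ s)
      · exact Finset.sup'_le _ _ (fun t _ => hs t)
    calc pref Q t ≤ pref (comp1 P) t := hmono Q (comp1 P) (h1 Q hQ) t
      _ ≤ pref1 P := Finset.le_sup' _ (Finset.mem_univ t)
      _ = pref0 P := h.symm
      _ = pref (comp0 P) s := hts.symm
      _ ≤ pref Q s := hmono (comp0 P) Q (h0 Q hQ) s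
end

section
/- For every incomplete fuzzy CSP P, if pref_0 = pref_1 then the set of necessarily optimal solutions is nonempty: NOS(P) ≠ ∅. -/
variable {A ι : Type*}

lemma comp0_le_completion (P : ι → A → Option unitInterval) (Q : ι → A → unitInterval)
    (hQ : IsCompletion P Q) (i : ι) (s : A) : comp0 P i s ≤ Q i s := by
  unfold comp0
  cases hP : P i s with
  | none => simp [unitInterval.nonneg']
  | some v => simp [hQ i s v hP]

lemma completion_le_comp1 (P : ι → A → Option unitInterval) (Q : ι → A → unitInterval)
    (hQ : IsCompletion P Q) (i : ι) (s : A) : Q i s ≤ comp1 P i s := by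
  unfold comp1
  cases hP : P i s with
  | none => simp [unitInterval.le_one']
  | some v => simp [hQ i s v hP]

lemma pref_mono [Fintype ι] [Nonempty ι] (Q Q' : ι → A → unitInterval) (s : A)
    (h : ∀ i, Q i s ≤ Q' i s) : pref Q s ≤ pref Q' s := by
  apply Finset.le_inf'
  intro i _
  exact (Finset.inf'_le _ (Finset.mem_univ i)).trans (h i)

/-- If `pref_0 = pref_1` then `NOS(P)` is nonempty. -/
theorem stmt_6 [Fintype ι] [Nonempty ι] [Fintype A] [Nonempty A]
    (P : ι → A → Option unitInterval) (h : pref0 P = pref1 P) :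
    (NOS P).Nonempty := by
  obtain ⟨s, -, hs⟩ := Finset.exists_mem_eq_sup' (Finset.univ_nonempty (α := A))
    (fun s => pref (comp0 P) s)
  refine ⟨s, fun Q hQ t => ?_⟩
  have h1 : pref Q t ≤ pref (comp1 P) t :=
    pref_mono _ _ _ (fun i => completion_le_comp1 P Q hQ i t)
  have h2 : pref (comp1 P) t ≤ pref1 P :=
    Finset.le_sup' _ (Finset.mem_univ t)
  have h3 : pref (comp0 P) s ≤ pref Q s :=
    pref_mono _ _ _ (fun i => comp0_le_completion P Q hQ i s)
  calc pref Q t ≤ pref1 P := h1.trans h2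
    _ = pref0 P := h.symm
    _ = pref (comp0 P) s := hs
    _ ≤ pref Q s := h3
end

section
/- For every incomplete fuzzy CSP P, every possibly optimal solution has preference between pref_0 and pref_1 in the 1-completion: if s ∈ POS(P) then pref_0 ≤ pref(P_1,s) ≤ pref_1. -/
variable {A ι : Type*}

lemma comp0_le [Fintype ι] [Nonempty ι] (P : ι → A → Option unitInterval)
    (Q : ι → A → unitInterval) (hQ : IsCompletion P Q) (t : A) :
    pref (comp0 P) t ≤ pref Q t := by
  apply Finset.le_inf'
  intro i _
  refine le_trans (Finset.inf'_le _ (Finset.mem_univ i)) ?_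
  cases h : P i t with
  | none => simp [comp0, h]
  | some v => simp [comp0, h, hQ i t v h]

lemma le_comp1 [Fintype ι] [Nonempty ι] (P : ι → A → Option unitInterval)
    (Q : ι → A → unitInterval) (hQ : IsCompletion P Q) (t : A) :
    pref Q t ≤ pref (comp1 P) t := by
  apply Finset.le_inf'
  intro i _
  refine le_trans (Finset.inf'_le _ (Finset.mem_univ i)) ?_
  cases h : P i t with
  | none => simp [comp1, h]; exact unitInterval.le_one'
  | some v => simp [comp1, h, hQ i t v h]

/-- If `s ∈ POS(P)` then `pref_0 ≤ pref(P_1,s) ≤ pref_1`. -/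
theorem stmt_8 [Fintype ι] [Nonempty ι] [Fintype A] [Nonempty A]
    (P : ι → A → Option unitInterval) (s : A) (hs : s ∈ POS P) :
    pref0 P ≤ pref (comp1 P) s ∧ pref (comp1 P) s ≤ pref1 P := by
  obtain ⟨Q, hQ, hopt⟩ := hs
  constructor
  · apply Finset.sup'_le
    intro t _
    exact le_trans (comp0_le P Q hQ t) (le_trans (hopt t) (le_comp1 P Q hQ s))
  · exact Finset.le_sup' _ (Finset.mem_univ s)
end

section
/- For every incomplete fuzzy CSP P and assignment s whose preference is independent of the missing preferences, i.e. pref(Q,s) takes the same value in every completion Q of P, if s is optimal in the 1-completion P_1 then s is also optimal in the 0-completion P_0. -/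
variable {A ι : Type*}

/-- If `pref(Q,s)` is the same in every completion `Q` of `P`, and `s` is
optimal in the 1-completion, then `s` is optimal in the 0-completion as well. -/
theorem stmt_10 [Fintype ι] [Nonempty ι] [Fintype A] [Nonempty A]
    (P : ι → A → Option unitInterval) (s : A)
    (hindep : ∀ Q Q', IsCompletion P Q → IsCompletion P Q' → pref Q s = pref Q' s)
    (hopt : Optimal (comp1 P) s) :
    Optimal (comp0 P) s := by
  have hc0 : IsCompletion P (comp0 P) := by
    intro i t v h; simp [comp0, h]
  have hc1 : IsCompletion P (comp1 P) := by
    intro i t v h; simp [comp1, h]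
  intro t
  have h1 : pref (comp0 P) t ≤ pref (comp1 P) t := by
    refine Finset.le_inf' _ _ fun i _ => le_trans (Finset.inf'_le _ (Finset.mem_univ i)) ?_
    cases h : P i t with
    | none => simp [comp0, comp1, h]
    | some v => simp [comp0, comp1, h]
  calc pref (comp0 P) t ≤ pref (comp1 P) t := h1
    _ ≤ pref (comp1 P) s := hopt t
    _ = pref (comp0 P) s := hindep _ _ hc1 hc0
end

section
/- Elicitation shrinks the optimality interval: if P' is a partial completion of an incomplete fuzzy CSP P, then for every assignment s, pref(P_0,s) ≤ pref(P'_0,s) and pref(P'_1,s) ≤ pref(P_1,s), and consequently pref_0(P) ≤ pref_0(P') ≤ pref_1(P') ≤ pref_1(P). -/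
variable {A ι : Type*}

/-- Elicitation shrinks the optimality interval: if `P'` is a partial
completion of `P` then for every `s`, `pref(P_0,s) ≤ pref(P'_0,s)` and
`pref(P'_1,s) ≤ pref(P_1,s)`, and consequently
`pref_0(P) ≤ pref_0(P') ≤ pref_1(P') ≤ pref_1(P)`. -/
theorem stmt_15 [Fintype ι] [Nonempty ι] [Fintype A] [Nonempty A]
    (P P' : ι → A → Option unitInterval) (h : IsPartialCompletion P P') :
    (∀ s : A, pref (comp0 P) s ≤ pref (comp0 P') s ∧
      pref (comp1 P') s ≤ pref (comp1 P) s) ∧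
    pref0 P ≤ pref0 P' ∧ pref0 P' ≤ pref1 P' ∧ pref1 P' ≤ pref1 P := by

  have hpt : ∀ Q Q' : ι → A → unitInterval, (∀ i (s : A), Q i s ≤ Q' i s) →
      ∀ s : A, pref Q s ≤ pref Q' s := by
    intro Q Q' hle s
    exact Finset.le_inf' _ _ (fun i hi => le_trans (Finset.inf'_le _ hi) (hle i s))
  have h0 : ∀ i (s : A), comp0 P i s ≤ comp0 P' i s := by
    intro i s
    unfold comp0
    cases hp : P i s with
    | none => exact ((P' i s).getD 0).2.1
    | some v => rw [h i s v hp]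
  have h1 : ∀ i (s : A), comp1 P' i s ≤ comp1 P i s := by
    intro i s
    unfold comp1
    cases hp : P i s with
    | none => exact ((P' i s).getD 1).2.2
    | some v => rw [h i s v hp]
  have h01 : ∀ i (s : A), comp0 P' i s ≤ comp1 P' i s := by
    intro i s
    unfold comp0 comp1
    cases hp : P' i s with
    | none => simp
    | some v => simp
  refine ⟨fun s => ⟨hpt _ _ h0 s, hpt _ _ h1 s⟩, ?_, ?_, ?_⟩ <;>
    exact Finset.sup'_mono_fun (fun s _ => hpt _ _ (by assumption) s)
end

section
/- Only possibly optimal solutions can become necessarily optimal: if P' is a partial completion of an incomplete fuzzy CSP P and s ∈ NOS(P'), then s ∈ POS(P). -/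
variable {A ι : Type*}

/-- Only possibly optimal solutions can become necessarily optimal: if `P'` is
a partial completion of `P` and `s ∈ NOS(P')`, then `s ∈ POS(P)`. -/
theorem stmt_17 [Fintype ι] [Nonempty ι] [Fintype A] [Nonempty A]
    (P P' : ι → A → Option unitInterval) (h : IsPartialCompletion P P')
    (s : A) (hs : s ∈ NOS P') :
    s ∈ POS P := by
  refine ⟨comp1 P', fun i t v hv => by simp [comp1, h i t v hv],
    hs (comp1 P') (fun i t v hv => by simp [comp1, hv])⟩
end

section
/- Correctness of the algorithm's stopping criterion: for every incomplete fuzzy CSP P, if an assignment s is optimal in the 1-completion P_1 and pref(P_1,s) = pref(P_0,s), then pref_0 = pref_1 and s is necessarily optimal: s ∈ NOS(P). -/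
variable {A ι : Type*}

/-- Correctness of the stopping criterion: if `s` is optimal in `P_1` and
`pref(P_1,s) = pref(P_0,s)`, then `pref_0 = pref_1` and `s ∈ NOS(P)`. -/
theorem stmt_18 [Fintype ι] [Nonempty ι] [Fintype A] [Nonempty A]
    (P : ι → A → Option unitInterval) (s : A)
    (hopt : Optimal (comp1 P) s)
    (heq : pref (comp1 P) s = pref (comp0 P) s) :
    pref0 P = pref1 P ∧ s ∈ NOS P := by

  have hmono : ∀ (Q R : ι → A → unitInterval), (∀ i t, Q i t ≤ R i t) →
      ∀ t, pref Q t ≤ pref R t := by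
    intro Q R h t
    exact Finset.le_inf' _ _ (fun i hi => (Finset.inf'_le _ hi).trans (h i t))
  have hbound : ∀ Q, IsCompletion P Q → ∀ i t,
      comp0 P i t ≤ Q i t ∧ Q i t ≤ comp1 P i t := by
    intro Q hQ i t
    cases hP : P i t with
    | none => simp [comp0, comp1, hP, unitInterval.nonneg', unitInterval.le_one']
    | some v => simp [comp0, comp1, hP, hQ i t v hP]
  have hc0 : IsCompletion P (comp0 P) := by intro i t v h; simp [comp0, h]
  have hc1 : IsCompletion P (comp1 P) := by intro i t v h; simp [comp1, h]
  have key : ∀ Q, IsCompletion P Q → pref Q s = pref (comp1 P) s := by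
    intro Q hQ
    refine le_antisymm (hmono _ _ (fun i t => (hbound Q hQ i t).2) s) ?_
    rw [heq]
    exact hmono _ _ (fun i t => (hbound Q hQ i t).1) s
  constructor
  · refine le_antisymm ?_ ?_
    · apply Finset.sup'_le
      intro t _
      apply Finset.le_sup' (f := fun t => pref (comp1 P) t) (Finset.mem_univ t) |>.trans' 
      exact hmono _ _ (fun i u => (hbound _ hc0 i u).2) t
    · apply Finset.sup'_le
      intro t _
      calc pref (comp1 P) t ≤ pref (comp1 P) s := hopt t
        _ = pref (comp0 P) s := heq
        _ ≤ pref0 P := Finset.le_sup' _ (Finset.mem_univ s)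
  · intro Q hQ t
    calc pref Q t ≤ pref (comp1 P) t := hmono _ _ (fun i u => (hbound Q hQ i u).2) t
      _ ≤ pref (comp1 P) s := hopt t
      _ = pref Q s := (key Q hQ).symm
end
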